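/- Let G ⊆ O(d) leave Ω ⊆ ℝᵈ invariant and let p : Ω → ℝⁿ, q : Ω → ℝᵐ be continuously differentiable symmetry-respecting bases with respect to orthogonal representations ρ_U, ρ_V. Then the stiffness matrix S := ∫_Ω (∇q)(x) (∇pᵀ)(x) dx, where (∇q)(x) ∈ ℝ^{m×d} has rows ∇q_i(x)ᵀ and (∇pᵀ)(x) ∈ ℝ^{d×n} has columns ∇p_j(x), satisfies ρ_V(g) S = S ρ_U(g) for all g ∈ G. -/

import Mathlib

open Matrix MeasureTheory

private lemma sum_mul_rearrange' {d M N : ℕ} (a : Fin M → ℝ) (b : Fin N → ℝ)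
    (u : Fin M → Fin d → ℝ) (v : Fin N → Fin d → ℝ) :
    ∑ k : Fin d, (∑ l, a l * u l k) * (∑ l', b l' * v l' k)
      = ∑ l, ∑ l', a l * b l' * ∑ k, u l k * v l' k := by
  calc ∑ k : Fin d, (∑ l, a l * u l k) * (∑ l', b l' * v l' k)
      = ∑ k : Fin d, ∑ l, ∑ l', (a l * u l k) * (b l' * v l' k) := by
        simp only [Finset.sum_mul, Finset.mul_sum]
        exact Finset.sum_congr rfl fun k _ => Finset.sum_comm
    _ = ∑ l, ∑ k : Fin d, ∑ l', (a l * u l k) * (b l' * v l' k) := Finset.sum_comm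
    _ = ∑ l, ∑ l', ∑ k : Fin d, (a l * u l k) * (b l' * v l' k) :=
        Finset.sum_congr rfl fun l _ => Finset.sum_comm
    _ = ∑ l, ∑ l', a l * b l' * ∑ k, u l k * v l' k := by
        refine Finset.sum_congr rfl fun l _ => Finset.sum_congr rfl fun l' _ => ?_
        rw [Finset.mul_sum]
        exact Finset.sum_congr rfl fun k _ => by ring

private lemma clm_eval' {d : ℕ} (f : (Fin d → ℝ) →L[ℝ] ℝ) (v : Fin d → ℝ) :
    f v = ∑ l, v l * f (Pi.single l 1) := by
  have hv : v = ∑ l, v l • (Pi.single l 1 : Fin d → ℝ) := by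
    funext k
    simp [Pi.single_apply, Finset.sum_ite_eq', mul_comm]
  conv_lhs => rw [hv]
  rw [map_sum]
  exact Finset.sum_congr rfl fun l _ => by simp

private lemma orth_sum' {d : ℕ} {A : Matrix (Fin d) (Fin d) ℝ} (h : A * Aᵀ = 1)
    (f h' : (Fin d → ℝ) →L[ℝ] ℝ) :
    ∑ k, f (A.mulVec (Pi.single k 1)) * h' (A.mulVec (Pi.single k 1))
      = ∑ k, f (Pi.single k 1) * h' (Pi.single k 1) := by
  have hev : ∀ (f : (Fin d → ℝ) →L[ℝ] ℝ) (k : Fin d),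
      f (A.mulVec (Pi.single k 1)) = ∑ l, f (Pi.single l 1) * A l k := by
    intro f k
    rw [clm_eval']
    refine Finset.sum_congr rfl fun l _ => ?_
    rw [Matrix.mulVec_single]
    simp [mul_comm]
  calc ∑ k, f (A.mulVec (Pi.single k 1)) * h' (A.mulVec (Pi.single k 1))
      = ∑ k, (∑ l, f (Pi.single l 1) * A l k) * (∑ l', h' (Pi.single l' 1) * A l' k) := by
        refine Finset.sum_congr rfl fun k _ => ?_; rw [hev f k, hev h' k]
    _ = ∑ l, ∑ l', f (Pi.single l 1) * h' (Pi.single l' 1) * ∑ k, A l k * A l' k :=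
        sum_mul_rearrange' _ _ _ _
    _ = ∑ k, f (Pi.single k 1) * h' (Pi.single k 1) := by
        have hAk : ∀ l l', ∑ k, A l k * A l' k = (1 : Matrix (Fin d) (Fin d) ℝ) l l' := by
          intro l l'
          rw [← h]
          simp [Matrix.mul_apply, Matrix.transpose_apply]
        simp_rw [hAk]
        simp [Matrix.one_apply]

private lemma chain_aux {d m : ℕ} (A : Matrix (Fin d) (Fin d) ℝ) (R : Matrix (Fin m) (Fin m) ℝ)
    (Ω : Set (Fin d → ℝ)) (hΩopen : IsOpen Ω)
    (q : (Fin d → ℝ) → (Fin m → ℝ))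
    (hqC1 : ∀ i : Fin m, ContDiff ℝ 1 fun x => q x i)
    (hq : ∀ x ∈ Ω, q (A.mulVec x) = R.mulVec (q x))
    (i : Fin m) (x : Fin d → ℝ) (hx : x ∈ Ω) (v : Fin d → ℝ) :
    fderiv ℝ (fun y => q y i) (A.mulVec x) (A.mulVec v)
      = ∑ l, R i l * fderiv ℝ (fun y => q y l) x v := by
  have hqd : ∀ l : Fin m, Differentiable ℝ (fun y => q y l) :=
    fun l => (hqC1 l).differentiable one_ne_zero
  set L : (Fin d → ℝ) →L[ℝ] (Fin d → ℝ) :=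
    LinearMap.toContinuousLinearMap (Matrix.toLin' A) with hL
  have hLapp : ∀ w, L w = A.mulVec w := fun w => by
    simp [hL, Matrix.toLin'_apply]
  have hcomp : fderiv ℝ (fun y => q (A.mulVec y) i) x
      = (fderiv ℝ (fun y => q y i) (A.mulVec x)).comp L := by
    have h1 : fderiv ℝ (fun y => q (L y) i) x
        = (fderiv ℝ (fun y => q y i) (L x)).comp (fderiv ℝ (⇑L) x) :=
      fderiv_comp x (hqd i (L x)) L.differentiableAt
    rw [L.fderiv] at h1
    simpa [hLapp] using h1
  have hev : (fun y => q (A.mulVec y) i) =ᶠ[nhds x] (fun y => ∑ l, R i l * q y l) := by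
    filter_upwards [hΩopen.mem_nhds hx] with y hy
    rw [hq y hy]
    simp [Matrix.mulVec, dotProduct]
  have hfd : fderiv ℝ (fun y => q (A.mulVec y) i) x
      = fderiv ℝ (fun y => ∑ l, R i l * q y l) x := hev.fderiv_eq
  have hsum : fderiv ℝ (fun y => ∑ l, R i l * q y l) x
      = ∑ l, R i l • fderiv ℝ (fun y => q y l) x := by
    rw [fderiv_fun_sum (fun l _ => ((hqd l x).const_mul _))]
    exact Finset.sum_congr rfl fun l _ => fderiv_const_mul (hqd l x) _
  have := congrArg (fun (T : (Fin d → ℝ) →L[ℝ] ℝ) => T v) (hcomp.symm.trans (hfd.trans hsum))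
  simpa [hLapp, smul_eq_mul] using this

theorem stiffness_matrix_intertwines {G : Type*} [Group G] [Fintype G] {d n m : ℕ}
    (act : G → Matrix (Fin d) (Fin d) ℝ)
    (hact : ∀ a b : G, act (a * b) = act a * act b)
    (hactorth : ∀ g : G, (act g)ᵀ * act g = 1)
    (Ω : Set (Fin d → ℝ)) (hΩmeas : MeasurableSet Ω) (hΩopen : IsOpen Ω)
    (hΩ : ∀ g : G, ∀ x ∈ Ω, (act g).mulVec x ∈ Ω)
    (ρU : G → Matrix (Fin n) (Fin n) ℝ) (ρV : G → Matrix (Fin m) (Fin m) ℝ)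
    (hUmul : ∀ g h : G, ρU (g * h) = ρU g * ρU h)
    (hVmul : ∀ g h : G, ρV (g * h) = ρV g * ρV h)
    (hUorth : ∀ g : G, (ρU g)ᵀ * ρU g = 1)
    (hVorth : ∀ g : G, (ρV g)ᵀ * ρV g = 1)
    (p : (Fin d → ℝ) → (Fin n → ℝ)) (q : (Fin d → ℝ) → (Fin m → ℝ))
    (hpC1 : ∀ j : Fin n, ContDiff ℝ 1 fun x => p x j)
    (hqC1 : ∀ i : Fin m, ContDiff ℝ 1 fun x => q x i)
    (hp : ∀ g : G, ∀ x ∈ Ω, p ((act g).mulVec x) = (ρU g).mulVec (p x))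
    (hq : ∀ g : G, ∀ x ∈ Ω, q ((act g).mulVec x) = (ρV g).mulVec (q x))
    (hint : ∀ (i : Fin m) (j : Fin n),
      IntegrableOn (fun x => ∑ k : Fin d,
        fderiv ℝ (fun y => q y i) x (Pi.single k 1) *
          fderiv ℝ (fun y => p y j) x (Pi.single k 1)) Ω volume) :
    ∀ g : G,
      ρV g * (Matrix.of fun i j => ∫ x in Ω, ∑ k : Fin d,
          fderiv ℝ (fun y => q y i) x (Pi.single k 1) *
            fderiv ℝ (fun y => p y j) x (Pi.single k 1))
        = (Matrix.of fun i j => ∫ x in Ω, ∑ k : Fin d,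
          fderiv ℝ (fun y => q y i) x (Pi.single k 1) *
            fderiv ℝ (fun y => p y j) x (Pi.single k 1)) * ρU g := by
  intro g
  set I : Fin m → Fin n → (Fin d → ℝ) → ℝ := fun i j x => ∑ k : Fin d,
    fderiv ℝ (fun y => q y i) x (Pi.single k 1) *
      fderiv ℝ (fun y => p y j) x (Pi.single k 1) with hIdef
  set S : Matrix (Fin m) (Fin n) ℝ := Matrix.of fun i j => ∫ x in Ω, I i j x with hSdef
  show ρV g * S = S * ρU g
  set A := act g with hAdef
  -- group/matrix basics
  have h1 : act (1:G) = act 1 * act 1 := by simpa using hact 1 1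
  have hA1 : act (1:G) = 1 := by
    calc act (1:G) = 1 * act 1 := (Matrix.one_mul _).symm
    _ = ((act 1)ᵀ * act 1) * act 1 := by rw [hactorth 1]
    _ = (act 1)ᵀ * (act 1 * act 1) := by rw [Matrix.mul_assoc]
    _ = (act 1)ᵀ * act 1 := by rw [← h1]
    _ = 1 := hactorth 1
  have hinv : act g⁻¹ * A = 1 := by rw [hAdef, ← hact]; simp [hA1]
  have hAAt : A * Aᵀ = 1 := mul_eq_one_comm.mp (hactorth g)
  -- the preimage of Ω is Ω
  have hpre : (fun x => A.mulVec x) ⁻¹' Ω = Ω := by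
    ext x
    constructor
    · intro hx
      have h2 := hΩ g⁻¹ _ hx
      rwa [Matrix.mulVec_mulVec, hinv, Matrix.one_mulVec] at h2
    · intro hx
      exact hΩ g x hx
  -- measure preservation
  have hdet2 : A.det * A.det = 1 := by
    have := congrArg Matrix.det (hactorth g)
    simpa [Matrix.det_mul, Matrix.det_transpose] using this
  have hdet : LinearMap.det (Matrix.toLin' A) ≠ 0 := by
    rw [LinearMap.det_toLin']
    intro h0; rw [h0] at hdet2; simp at hdet2
  have habs : |(LinearMap.det (Matrix.toLin' A))⁻¹| = 1 := by
    rw [LinearMap.det_toLin', abs_inv]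
    rcases mul_self_eq_one_iff.mp hdet2 with h1 | h1 <;> simp [h1]
  have hfun : (fun x : Fin d → ℝ => A.mulVec x) = ⇑(Matrix.toLin' A) := by
    funext x; simp [Matrix.toLin'_apply]
  have hcont : Continuous (fun x : Fin d → ℝ => A.mulVec x) := by
    rw [hfun]; exact LinearMap.continuous_of_finiteDimensional _
  have hmp : MeasurePreserving (fun x : Fin d → ℝ => A.mulVec x) volume volume := by
    refine ⟨hcont.measurable, ?_⟩
    rw [hfun, Measure.map_linearMap_addHaar_eq_smul_addHaar volume hdet, habs]
    simp
  have hcont' : Continuous (fun x : Fin d → ℝ => Aᵀ.mulVec x) := by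
    have : (fun x : Fin d → ℝ => Aᵀ.mulVec x) = ⇑(Matrix.toLin' Aᵀ) := by
      funext x; simp [Matrix.toLin'_apply]
    rw [this]; exact LinearMap.continuous_of_finiteDimensional _
  have hemb : MeasurableEmbedding (fun x : Fin d → ℝ => A.mulVec x) := by
    let e : Homeomorph (Fin d → ℝ) (Fin d → ℝ) :=
      { toFun := fun x => A.mulVec x
        invFun := fun x => Aᵀ.mulVec x
        left_inv := fun x => by
          show Aᵀ.mulVec (A.mulVec x) = x
          rw [Matrix.mulVec_mulVec, hactorth g, Matrix.one_mulVec]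
        right_inv := fun x => by
          show A.mulVec (Aᵀ.mulVec x) = x
          rw [Matrix.mulVec_mulVec, hAAt, Matrix.one_mulVec]
        continuous_toFun := hcont
        continuous_invFun := hcont' }
    exact e.measurableEmbedding
  -- chain rules
  have hchainq := chain_aux A (ρV g) Ω hΩopen q hqC1 (fun x hx => hq g x hx)
  have hchainp := chain_aux A (ρU g) Ω hΩopen p hpC1 (fun x hx => hp g x hx)
  -- pointwise identity
  have hpt : ∀ (i : Fin m) (j : Fin n), ∀ x ∈ Ω,
      I i j (A.mulVec x) = ∑ l, ∑ l', ρV g i l * ρU g j l' * I l l' x := by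
    intro i j x hx
    have h1 : I i j (A.mulVec x)
        = ∑ k, (∑ l, ρV g i l * fderiv ℝ (fun y => q y l) x (Pi.single k 1))
            * (∑ l', ρU g j l' * fderiv ℝ (fun y => p y l') x (Pi.single k 1)) := by
      simp only [hIdef]
      rw [← orth_sum' hAAt (fderiv ℝ (fun y => q y i) (A.mulVec x))
        (fderiv ℝ (fun y => p y j) (A.mulVec x))]
      refine Finset.sum_congr rfl fun k _ => ?_
      rw [hchainq i x hx, hchainp j x hx]
    rw [h1, sum_mul_rearrange']
  -- integral identity
  have hS : ∀ (i : Fin m) (j : Fin n),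
      S i j = ∑ l, ∑ l', ρV g i l * ρU g j l' * S l l' := by
    intro i j
    have h1 : S i j = ∫ x in Ω, I i j (A.mulVec x) := by
      have h2 := hmp.setIntegral_preimage_emb hemb (I i j) Ω
      rw [hpre] at h2
      exact h2.symm
    rw [h1, setIntegral_congr_fun hΩmeas (hpt i j)]
    have hint' : ∀ (l : Fin m) (l' : Fin n),
        IntegrableOn (fun x => ρV g i l * ρU g j l' * I l l' x) Ω volume :=
      fun l l' => (hint l l').const_mul _
    rw [integral_finset_sum _ (fun l _ => integrable_finset_sum _ (fun l' _ => hint' l l'))]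
    refine Finset.sum_congr rfl fun l _ => ?_
    rw [integral_finset_sum _ (fun l' _ => hint' l l')]
    refine Finset.sum_congr rfl fun l' _ => ?_
    exact integral_const_mul _ _
  have key : S = ρV g * S * (ρU g)ᵀ := by
    ext i j
    rw [hS i j]
    simp only [Matrix.mul_apply, Matrix.transpose_apply]
    rw [Finset.sum_comm]
    refine Finset.sum_congr rfl fun l' _ => ?_
    rw [Finset.sum_mul]
    exact Finset.sum_congr rfl fun l _ => by ring
  have hfin : S * ρU g = ρV g * S := by
    conv_lhs => rw [key]
    rw [Matrix.mul_assoc (ρV g * S) (ρU g)ᵀ (ρU g), hUorth, Matrix.mul_one]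
  exact hfin.symm
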